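/- Let E be a real Hilbert space, let Δt > 0, let N ≥ 1 be a natural number with T = NΔt, set t_n = nΔt, and let η : ℝ → E be twice continuously differentiable on [0, T]. Then ∑_{n=1}^{N} ‖(η(t_n) − η(t_{n-1}))/Δt − η'(t_n)‖² ≤ (Δt/3) ∫_0^T ‖η''(t)‖² dt. -/

import Mathlib

/-! Taylor's formula with integral remainder gives
`(η(t_n) - η(t_{n-1}))/Δt - η'(t_n) = -Δt⁻¹ ∫_{t_{n-1}}^{t_n} (t - t_{n-1}) η''(t) dt`.
By Cauchy–Schwarz and `∫_{t_{n-1}}^{t_n} (t - t_{n-1})² dt = Δt³/3`, the squared norm of this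
remainder is at most `(Δt/3) ∫_{t_{n-1}}^{t_n} ‖η''‖²`, and the local integrals add up to the
integral over `[0, T]`. -/

open MeasureTheory Set

theorem integral_mul_sq_le_integral_sq_mul_integral_sq {α : Type*} [MeasurableSpace α]
    {μ : Measure α} {f g : α → ℝ} (hf : Integrable (fun x => f x ^ 2) μ)
    (hg : Integrable (fun x => g x ^ 2) μ) (hfg : Integrable (fun x => f x * g x) μ) :
    (∫ x, f x * g x ∂μ) ^ 2 ≤ (∫ x, f x ^ 2 ∂μ) * ∫ x, g x ^ 2 ∂μ := by
  -- `s ↦ ∫ (s f + g)²` is a nonnegative quadratic, so its discriminant is nonpositive.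
  have hquad : ∀ s : ℝ, 0 ≤ (∫ x, f x ^ 2 ∂μ) * (s * s) + 2 * (∫ x, f x * g x ∂μ) * s
      + ∫ x, g x ^ 2 ∂μ := by
    intro s
    have hexpand : ∫ x, (s * f x + g x) ^ 2 ∂μ = (∫ x, f x ^ 2 ∂μ) * (s * s)
        + 2 * (∫ x, f x * g x ∂μ) * s + ∫ x, g x ^ 2 ∂μ := by
      have hpt : (fun x => (s * f x + g x) ^ 2)
          = fun x => (s * s) * f x ^ 2 + ((2 * s) * (f x * g x) + g x ^ 2) := by
        funext x; ring
      rw [hpt, integral_add, integral_add, integral_const_mul, integral_const_mul]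
      · ring
      exacts [hfg.const_mul _, hg, hf.const_mul _, (hfg.const_mul _).add hg]
    exact hexpand ▸ integral_nonneg fun x => sq_nonneg _
  have hdisc := discrim_le_zero hquad
  rw [discrim] at hdisc
  nlinarith

namespace intervalIntegral

theorem integral_mul_sq_le_integral_sq_mul_integral_sq {a b : ℝ} (hab : a ≤ b) {f g : ℝ → ℝ}
    (hf : ContinuousOn f (Icc a b)) (hg : ContinuousOn g (Icc a b)) :
    (∫ t in a..b, f t * g t) ^ 2 ≤ (∫ t in a..b, f t ^ 2) * ∫ t in a..b, g t ^ 2 := by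
  have hint {h : ℝ → ℝ} (hh : ContinuousOn h (Icc a b)) : IntegrableOn h (Ioc a b) :=
    (hh.integrableOn_Icc).mono_set Ioc_subset_Icc_self
  simp only [integral_of_le hab]
  exact _root_.integral_mul_sq_le_integral_sq_mul_integral_sq
    (hint (hf.pow 2)) (hint (hg.pow 2)) (hint (hf.mul hg))

variable {E : Type*} [NormedAddCommGroup E] [NormedSpace ℝ E]

theorem norm_integral_sub_smul_sq_le {a b : ℝ} (hab : a ≤ b) {g : ℝ → E}
    (hg : ContinuousOn g (Icc a b)) :
    ‖∫ t in a..b, (t - a) • g t‖ ^ 2 ≤ (b - a) ^ 3 / 3 * ∫ t in a..b, ‖g t‖ ^ 2 := by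
  have hweight : ∫ t in a..b, |t - a| ^ 2 = (b - a) ^ 3 / 3 := by
    simp only [sq_abs]
    rw [integral_comp_sub_right (fun x : ℝ => x ^ 2) a, sub_self, integral_pow]
    ring
  calc ‖∫ t in a..b, (t - a) • g t‖ ^ 2
      ≤ (∫ t in a..b, |t - a| * ‖g t‖) ^ 2 := by
        gcongr
        simpa only [norm_smul, Real.norm_eq_abs] using
          norm_integral_le_integral_norm (f := fun t => (t - a) • g t) hab
    _ ≤ (∫ t in a..b, |t - a| ^ 2) * ∫ t in a..b, ‖g t‖ ^ 2 :=
        integral_mul_sq_le_integral_sq_mul_integral_sq hab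
          (continuousOn_id.sub continuousOn_const).abs hg.norm
    _ = (b - a) ^ 3 / 3 * ∫ t in a..b, ‖g t‖ ^ 2 := by rw [hweight]

theorem sum_integral_Icc_uniform_grid {f : ℝ → E} (h : ℝ) (N : ℕ)
    (hf : IntervalIntegrable f volume 0 (N * h)) :
    ∑ n ∈ Finset.Icc 1 N, ∫ t in ((n : ℝ) - 1) * h..n * h, f t = ∫ t in 0..N * h, f t := by
  have hnode : ∀ k ≤ N, (k : ℝ) * h ∈ uIcc 0 (N * h) := by
    intro k hk
    have hkN : (k : ℝ) ≤ N := by exact_mod_cast hk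
    rcases le_total 0 h with hh | hh
    · exact mem_uIcc.mpr (Or.inl ⟨by positivity, by gcongr⟩)
    · exact mem_uIcc.mpr (Or.inr ⟨by nlinarith, by nlinarith⟩)
  have hpieces : ∀ k < N, IntervalIntegrable f volume ((k : ℝ) * h) (((k + 1 : ℕ) : ℝ) * h) :=
    fun k hk => hf.mono_set (uIcc_subset_uIcc (hnode k hk.le) (hnode (k + 1) hk))
  rw [← Finset.Ico_add_one_right_eq_Icc, Finset.sum_Ico_eq_sum_range]
  simpa [add_comm] using sum_integral_adjacent_intervals (a := fun k : ℕ => (k : ℝ) * h) hpieces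

variable [CompleteSpace E]

theorem integral_sub_smul_eq_smul_deriv_sub_sub {a b : ℝ} (hab : a ≤ b) {f f' f'' : ℝ → E}
    (hf : ∀ t ∈ Icc a b, HasDerivWithinAt f (f' t) (Icc a b) t)
    (hf' : ∀ t ∈ Icc a b, HasDerivWithinAt f' (f'' t) (Icc a b) t)
    (hf'' : ContinuousOn f'' (Icc a b)) :
    ∫ t in a..b, (t - a) • f'' t = (b - a) • f' b - (f b - f a) := by
  have hderiv : ∀ t ∈ Ioo a b,
      HasDerivAt (fun s => (s - a) • f' s - f s) ((t - a) • f'' t) t := by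
    intro t ht
    have hnhds : Icc a b ∈ nhds t := Icc_mem_nhds ht.1 ht.2
    have hprod := (((hasDerivAt_id t).sub_const a).smul
      ((hf' t (Ioo_subset_Icc_self ht)).hasDerivAt hnhds)).sub
      ((hf t (Ioo_subset_Icc_self ht)).hasDerivAt hnhds)
    convert hprod using 1
    · rfl
    · simp
  have hcont : ContinuousOn (fun s => (s - a) • f' s - f s) (Icc a b) :=
    ((continuousOn_id.sub continuousOn_const).smul
      fun t ht => (hf' t ht).continuousWithinAt).sub fun t ht => (hf t ht).continuousWithinAt
  have hint : IntervalIntegrable (fun t => (t - a) • f'' t) volume a b :=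
    ((continuousOn_id.sub continuousOn_const).smul hf'').intervalIntegrable_of_Icc hab
  rw [integral_eq_sub_of_hasDeriv_right_of_le hab hcont
    (fun t ht => (hderiv t ht).hasDerivWithinAt) hint]
  simp only [sub_self, zero_smul, zero_sub]
  abel

theorem norm_inv_smul_sub_sub_deriv_sq_le {a b : ℝ} (hab : a < b) {f f' f'' : ℝ → E}
    (hf : ∀ t ∈ Icc a b, HasDerivWithinAt f (f' t) (Icc a b) t)
    (hf' : ∀ t ∈ Icc a b, HasDerivWithinAt f' (f'' t) (Icc a b) t)
    (hf'' : ContinuousOn f'' (Icc a b)) :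
    ‖(b - a)⁻¹ • (f b - f a) - f' b‖ ^ 2 ≤ (b - a) / 3 * ∫ t in a..b, ‖f'' t‖ ^ 2 := by
  have hpos : 0 < b - a := sub_pos.mpr hab
  have hremainder : (b - a)⁻¹ • (f b - f a) - f' b
      = -(b - a)⁻¹ • ∫ t in a..b, (t - a) • f'' t := by
    rw [integral_sub_smul_eq_smul_deriv_sub_sub hab.le hf hf' hf'']
    simp only [smul_sub, smul_smul, neg_mul, inv_mul_cancel₀ hpos.ne', neg_smul, one_smul]
    abel
  calc ‖(b - a)⁻¹ • (f b - f a) - f' b‖ ^ 2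
      = ((b - a) ^ 2)⁻¹ * ‖∫ t in a..b, (t - a) • f'' t‖ ^ 2 := by
        rw [hremainder, norm_smul, norm_neg, norm_inv, Real.norm_of_nonneg hpos.le, mul_pow,
          inv_pow]
    _ ≤ ((b - a) ^ 2)⁻¹ * ((b - a) ^ 3 / 3 * ∫ t in a..b, ‖f'' t‖ ^ 2) := by
        gcongr
        exact norm_integral_sub_smul_sq_le hab.le hf''
    _ = (b - a) / 3 * ∫ t in a..b, ‖f'' t‖ ^ 2 := by
        field_simp

end intervalIntegral

theorem backward_euler_consistency_estimate_general
    (E : Type*) [NormedAddCommGroup E] [InnerProductSpace ℝ E] [CompleteSpace E]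
    (Δt : ℝ) (hΔt : 0 < Δt) (N : ℕ) (T : ℝ) (hT : T = N * Δt)
    (η η' η'' : ℝ → E)
    (hη' : ∀ t ∈ Set.Icc (0 : ℝ) T, HasDerivWithinAt η (η' t) (Set.Icc (0 : ℝ) T) t)
    (hη'' : ∀ t ∈ Set.Icc (0 : ℝ) T, HasDerivWithinAt η' (η'' t) (Set.Icc (0 : ℝ) T) t)
    (hcont : ContinuousOn η'' (Set.Icc (0 : ℝ) T)) :
    ∑ n ∈ Finset.Icc 1 N,
        ‖(Δt)⁻¹ • (η (n * Δt) - η (((n : ℝ) - 1) * Δt)) - η' (n * Δt)‖ ^ 2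
      ≤ (Δt / 3) * ∫ t in (0 : ℝ)..T, ‖η'' t‖ ^ 2 := by
  have hstep : ∀ n ∈ Finset.Icc 1 N,
      ‖(Δt)⁻¹ • (η (n * Δt) - η (((n : ℝ) - 1) * Δt)) - η' (n * Δt)‖ ^ 2
        ≤ Δt / 3 * ∫ t in ((n : ℝ) - 1) * Δt..n * Δt, ‖η'' t‖ ^ 2 := by
    intro n hn
    obtain ⟨hn1, hnN⟩ := Finset.mem_Icc.mp hn
    have hsub : Icc (((n : ℝ) - 1) * Δt) (n * Δt) ⊆ Icc 0 T := by
      have : (1 : ℝ) ≤ n := by exact_mod_cast hn1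
      have : (n : ℝ) ≤ N := by exact_mod_cast hnN
      exact Icc_subset_Icc (by nlinarith) (by rw [hT]; gcongr)
    have hlen : (n : ℝ) * Δt - ((n : ℝ) - 1) * Δt = Δt := by ring
    simpa only [hlen] using intervalIntegral.norm_inv_smul_sub_sub_deriv_sq_le (by linarith)
      (fun t ht => (hη' t (hsub ht)).mono hsub) (fun t ht => (hη'' t (hsub ht)).mono hsub)
      (hcont.mono hsub)
  have hint : IntervalIntegrable (fun t => ‖η'' t‖ ^ 2) volume 0 T :=
    (hcont.norm.pow 2).intervalIntegrable_of_Icc (by rw [hT]; positivity)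
  calc _ ≤ ∑ n ∈ Finset.Icc 1 N, Δt / 3 * ∫ t in ((n : ℝ) - 1) * Δt..n * Δt, ‖η'' t‖ ^ 2 :=
        Finset.sum_le_sum hstep
    _ = Δt / 3 * ∫ t in (0 : ℝ)..T, ‖η'' t‖ ^ 2 := by
        subst hT
        rw [← Finset.mul_sum, intervalIntegral.sum_integral_Icc_uniform_grid Δt N hint]

/-- Consistency estimate for the backward Euler discrete time derivative:
if `η` is twice continuously differentiable on `[0, T]` with `T = NΔt` and
`t_n = nΔt`, then
`∑_{n=1}^{N} ‖(η(t_n) − η(t_{n−1}))/Δt − η'(t_n)‖² ≤ (Δt/3) ∫_0^T ‖η''(t)‖² dt`. -/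
theorem backward_euler_consistency_estimate
    (E : Type*) [NormedAddCommGroup E] [InnerProductSpace ℝ E] [CompleteSpace E]
    (Δt : ℝ) (hΔt : 0 < Δt) (N : ℕ) (hN : 1 ≤ N) (T : ℝ) (hT : T = N * Δt)
    (η η' η'' : ℝ → E)
    (hη' : ∀ t ∈ Set.Icc (0 : ℝ) T, HasDerivWithinAt η (η' t) (Set.Icc (0 : ℝ) T) t)
    (hη'' : ∀ t ∈ Set.Icc (0 : ℝ) T, HasDerivWithinAt η' (η'' t) (Set.Icc (0 : ℝ) T) t)
    (hcont : ContinuousOn η'' (Set.Icc (0 : ℝ) T)) :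
    ∑ n ∈ Finset.Icc 1 N,
        ‖(Δt)⁻¹ • (η (n * Δt) - η (((n : ℝ) - 1) * Δt)) - η' (n * Δt)‖ ^ 2
      ≤ (Δt / 3) * ∫ t in (0 : ℝ)..T, ‖η'' t‖ ^ 2 :=
  backward_euler_consistency_estimate_general E Δt hΔt N T hT η η' η'' hη' hη'' hcont
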